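/- Suppose a choice correspondence c over finite nonempty sets of lotteries admits an AREU representation (R, {u_p}) in which every utility is normalized so that u_p(w) = 0 and u_p(b) = 1, and suppose c satisfies Transitivity over 𝒜. Then u_{p₁} = u_{p₂} for all p₁, p₂ ∈ Δ(X) \ Δ({b,w}). -/

import Mathlib

open scoped BigOperators

noncomputable section

/-- Lotteries over the finite prize set `X ⊂ ℝ`, as a subset of Euclidean space `ℝ^X`. -/
abbrev Lot (X : Finset ℝ) : Type :=
  {p : EuclideanSpace ℝ ↥X // (∀ x, 0 ≤ p x) ∧ ∑ x, p x = 1}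

variable {X : Finset ℝ}

noncomputable instance : DecidableEq (Lot X) := Classical.decEq _

/-- The degenerate distribution on prize `x`, as a vector. -/
def degv (x : ↥X) : EuclideanSpace ℝ ↥X := WithLp.toLp 2 (fun y => if y = x then 1 else 0)

/-- The degenerate lottery `δ_x`. -/
def deg (x : ↥X) : Lot X :=
  ⟨degv x, fun y => by by_cases h : y = x <;> simp [degv, h], by simp [degv]⟩

/-- The mixture `αp + (1-α)q`, as a vector. -/
def mixv (α : ℝ) (p q : Lot X) : EuclideanSpace ℝ ↥X := α • p.1 + (1 - α) • q.1

/-- The best prize `b = max X` as an element of `X`. -/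
def bIdx (hX : X.Nonempty) : ↥X := ⟨X.max' hX, X.max'_mem hX⟩

/-- The worst prize `w = min X` as an element of `X`. -/
def wIdx (hX : X.Nonempty) : ↥X := ⟨X.min' hX, X.min'_mem hX⟩

/-- `p` first-order stochastically dominates `q`. -/
def FOSDom (p q : Lot X) : Prop :=
  ∀ z ∈ X, (∑ x : ↥X, if z ≤ (x : ℝ) then q.1 x else 0) ≤
    ∑ x : ↥X, if z ≤ (x : ℝ) then p.1 x else 0

/-- `p` is a mean-preserving spread of `q`. -/
def MPS (p q : Lot X) : Prop :=
  p ≠ q ∧ (∑ x : ↥X, p.1 x * (x : ℝ)) = (∑ x : ↥X, q.1 x * (x : ℝ)) ∧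
  ∀ z : ℝ, (∑ x : ↥X, q.1 x * max (z - (x : ℝ)) 0) ≤
    ∑ x : ↥X, p.1 x * max (z - (x : ℝ)) 0

/-- `p` is an extreme spread of `q`. -/
def ES (hX : X.Nonempty) (p q : Lot X) : Prop :=
  ∃ β α : ℝ, 0 ≤ β ∧ β < 1 ∧ q.1 (bIdx hX) < α ∧ α < 1 - q.1 (wIdx hX) ∧
    p.1 = β • q.1 + (1 - β) • (α • degv (bIdx hX) + (1 - α) • degv (wIdx hX))

/-- A reference order is risk-consistent if safer lotteries rank higher. -/
def RiskConsistent (hX : X.Nonempty) (R : Lot X → Lot X → Prop) : Prop :=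
  ∀ p q : Lot X, (MPS p q ∨ ES hX p q) → R q p

/-- `p` is a mixture of `δ_b` and `δ_w`, i.e. `p ∈ Δ({b,w})`. -/
def inBW (hX : X.Nonempty) (p : Lot X) : Prop :=
  ∀ x : ↥X, x ≠ bIdx hX → x ≠ wIdx hX → p.1 x = 0

/-- Expected utility of lottery `p` under Bernoulli utility `u`. -/
def EV (p : Lot X) (u : ↥X → ℝ) : ℝ := ∑ x : ↥X, p.1 x * u x

/-- `c` satisfies WARP over a collection `S` of choice problems. -/
def WARPover (c : Finset (Lot X) → Finset (Lot X)) (S : Set (Finset (Lot X))) : Prop :=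
  ∀ A ∈ S, ∀ B ∈ S, B ⊆ A → (c A ∩ B).Nonempty → c A ∩ B = c B

/-- `c` satisfies Independence over a collection `S` of choice problems. -/
def IndepOver (c : Finset (Lot X) → Finset (Lot X)) (S : Set (Finset (Lot X))) : Prop :=
  ∀ A ∈ S, ∀ B ∈ S, ∀ α : ℝ, 0 < α → α < 1 →
    ∀ p q s pas qas : Lot X, pas.1 = mixv α p s → qas.1 = mixv α q s →
      (p ∈ c A → q ∈ A → qas ∈ c B → pas ∈ B → pas ∈ c B) ∧
      (pas ∈ c A → qas ∈ A → q ∈ c B → p ∈ B → p ∈ c B)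

/-- Continuity: `c` has a closed graph w.r.t. the Hausdorff distance. -/
def ClosedGraphC (c : Finset (Lot X) → Finset (Lot X)) : Prop :=
  ∀ (x : Lot X) (xs : ℕ → Lot X) (A : Finset (Lot X)) (As : ℕ → Finset (Lot X)),
    A.Nonempty → (∀ n, (As n).Nonempty) →
    Filter.Tendsto xs Filter.atTop (nhds x) →
    Filter.Tendsto (fun n => Metric.hausdorffDist ((As n : Set (Lot X))) (A : Set (Lot X)))
      Filter.atTop (nhds 0) →
    (∀ n, xs n ∈ c (As n)) → x ∈ c A

/-- `c` admits an AREU representation with data `(R, u, r)`. -/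
def IsAREU (hX : X.Nonempty) (c : Finset (Lot X) → Finset (Lot X))
    (R : Lot X → Lot X → Prop) (u : Lot X → ↥X → ℝ) (r : Finset (Lot X) → Lot X) : Prop :=
  IsLinearOrder (Lot X) R ∧ RiskConsistent hX R ∧
  (∀ p : Lot X, ∀ x y : ↥X, (x : ℝ) < (y : ℝ) → u p x < u p y) ∧
  (∀ (p : Lot X) (x : ↥X), u p x ∈ Set.Icc (0 : ℝ) 1) ∧
  (∀ A : Finset (Lot X), A.Nonempty → r A ∈ A ∧ ∀ p ∈ A, R (r A) p) ∧
  (∀ A : Finset (Lot X), A.Nonempty → ∀ p : Lot X,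
    p ∈ c A ↔ p ∈ A ∧ ∀ q ∈ A, EV q (u (r A)) ≤ EV p (u (r A))) ∧
  (∀ p q : Lot X, R q p → ∃ f : ℝ → ℝ, ConcaveOn ℝ (Set.Icc 0 1) f ∧
    (∀ t ∈ Set.Icc (0 : ℝ) 1, f t ∈ Set.Icc (0 : ℝ) 1) ∧ ∀ x : ↥X, u q x = f (u p x)) ∧
  ClosedGraphC c


/-- `c` satisfies Transitivity over a collection `S` of choice problems. -/
def TransOver (c : Finset (Lot X) → Finset (Lot X)) (S : Set (Finset (Lot X))) : Prop :=
  ∀ p q s : Lot X,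
    ({p, q} : Finset (Lot X)) ∈ S → ({q, s} : Finset (Lot X)) ∈ S →
    ({p, s} : Finset (Lot X)) ∈ S →
    p ∈ c {p, q} → q ∈ c {q, s} → p ∈ c {p, s}

/-! For a lottery `q` outside `Δ({b,w})` let `v(q) = E_q[u_q]`. Against a binary lottery
`α δ_b + (1 - α) δ_w`, `q` is chosen iff `α ≤ v(q)`: either `q` is the reference point, or the
binary lottery is not an extreme spread of `q` and the comparison does not depend on the
utility. Through such binary lotteries, Transitivity makes lotteries with equal `v` indifferent,
and the closed graph makes `v` continuous.

If `p R q`, `q` has full support and `v(p)` lies strictly between `q(b)` and `1 - q(w)`, the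
intermediate value theorem gives an extreme spread `s` of `q` with `v(s) = v(p)`. Indifference of
`p` and `s` under `u_p`, together with `u_s ≤ u_q ≤ u_p` (concavity), forces `u_p = u_q`.
So `u` is locally constant, hence constant, along segments of full-support lotteries, and every
`p` outside `Δ({b,w})` has a full-support mean-preserving spread with the same utility. -/

open Filter Topology

lemma Metric.hausdorffDist_pair_le {α : Type*} [PseudoMetricSpace α] (a₁ b₁ a₂ b₂ : α) :
    Metric.hausdorffDist ({a₁, b₁} : Set α) {a₂, b₂} ≤ max (dist a₁ a₂) (dist b₁ b₂) := by
  refine Metric.hausdorffDist_le_of_mem_dist (le_max_of_le_left dist_nonneg) ?_ ?_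
  · rintro x (rfl | rfl)
    · exact ⟨a₂, by simp, le_max_left _ _⟩
    · exact ⟨b₂, by simp, le_max_right _ _⟩
  · rintro x (rfl | rfl)
    · exact ⟨a₁, by simp, dist_comm a₁ x ▸ le_max_left _ _⟩
    · exact ⟨b₁, by simp, dist_comm b₁ x ▸ le_max_right _ _⟩

lemma ConcaveOn.le_of_map_zero_of_map_one {f : ℝ → ℝ} (hf : ConcaveOn ℝ (Set.Icc 0 1) f)
    (h₀ : f 0 = 0) (h₁ : f 1 = 1) {t : ℝ} (ht : t ∈ Set.Icc 0 1) : t ≤ f t := by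
  have := hf.2 (Set.left_mem_Icc.2 zero_le_one) (Set.right_mem_Icc.2 zero_le_one)
    (sub_nonneg.2 ht.2) ht.1 (sub_add_cancel 1 t)
  simpa [h₀, h₁] using this

section Prizes

variable {hX : X.Nonempty}

lemma coe_le_bIdx (x : ↥X) : (x : ℝ) ≤ bIdx hX := X.le_max' _ x.2

lemma wIdx_le_coe (x : ↥X) : (wIdx hX : ℝ) ≤ x := X.min'_le _ x.2

lemma coe_lt_bIdx {x : ↥X} (h : x ≠ bIdx hX) : (x : ℝ) < bIdx hX :=
  (coe_le_bIdx x).lt_of_ne fun h' => h (Subtype.ext h')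

lemma wIdx_lt_coe {x : ↥X} (h : x ≠ wIdx hX) : (wIdx hX : ℝ) < x :=
  (wIdx_le_coe x).lt_of_ne fun h' => h (Subtype.ext h'.symm)

end Prizes

namespace Lot

lemma nonneg (p : Lot X) (x : ↥X) : 0 ≤ p.1 x := p.2.1 x

lemma sum_eq_one (p : Lot X) : ∑ x, p.1 x = 1 := p.2.2

lemma apply_le_one (p : Lot X) (x : ↥X) : p.1 x ≤ 1 :=
  (Finset.single_le_sum (fun i _ => p.nonneg i) (Finset.mem_univ x)).trans_eq p.sum_eq_one

lemma apply_add_apply_le_one (p : Lot X) {x y : ↥X} (h : x ≠ y) : p.1 x + p.1 y ≤ 1 := by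
  rw [← Finset.sum_pair h]
  exact (Finset.sum_le_sum_of_subset_of_nonneg (Finset.subset_univ _)
    fun i _ _ => p.nonneg i).trans_eq p.sum_eq_one

def ofFun (f : ↥X → ℝ) (h₀ : ∀ x, 0 ≤ f x) (h₁ : ∑ x, f x = 1) : Lot X :=
  ⟨WithLp.toLp 2 f, h₀, h₁⟩

@[simp]
lemma ofFun_apply (f : ↥X → ℝ) (h₀ : ∀ x, 0 ≤ f x) (h₁ : ∑ x, f x = 1) (x : ↥X) :
    (ofFun f h₀ h₁).1 x = f x := rfl

lemma deg_apply (a x : ↥X) : (deg a).1 x = if x = a then 1 else 0 := rfl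

/-- The mixture `p^β q`; the weight is clamped to `[0, 1]`, so `mix β p q` is a lottery for
every real `β` and `β ↦ mix β p q` is a path on all of `ℝ`. -/
def mix (β : ℝ) (p q : Lot X) : Lot X :=
  ofFun (fun x => Set.projIcc 0 1 zero_le_one β * p.1 x
      + (1 - Set.projIcc 0 1 zero_le_one β) * q.1 x)
    (fun x => add_nonneg (mul_nonneg (Set.projIcc 0 1 zero_le_one β).2.1 (p.nonneg x))
      (mul_nonneg (sub_nonneg.2 (Set.projIcc 0 1 zero_le_one β).2.2) (q.nonneg x)))
    (by simp only [Finset.sum_add_distrib, ← Finset.mul_sum, sum_eq_one]; ring)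

lemma mix_apply_of_mem {β : ℝ} (hβ : β ∈ Set.Icc 0 1) (p q : Lot X) (x : ↥X) :
    (mix β p q).1 x = β * p.1 x + (1 - β) * q.1 x := by
  simp [mix, Set.projIcc_of_mem _ hβ]

lemma mix_val_of_mem {β : ℝ} (hβ : β ∈ Set.Icc 0 1) (p q : Lot X) :
    (mix β p q).1 = β • p.1 + (1 - β) • q.1 := by
  ext x
  simp [mix_apply_of_mem hβ]

lemma mix_zero (p q : Lot X) : mix 0 p q = q :=
  Subtype.ext <| by simp [mix_val_of_mem (Set.left_mem_Icc.2 zero_le_one)]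

lemma mix_one (p q : Lot X) : mix 1 p q = p :=
  Subtype.ext <| by simp [mix_val_of_mem (Set.right_mem_Icc.2 zero_le_one)]

lemma mix_apply_pos (β : ℝ) {p q : Lot X} {x : ↥X} (hp : 0 < p.1 x) (hq : 0 < q.1 x) :
    0 < (mix β p q).1 x := by
  simp only [mix, ofFun_apply]
  obtain ⟨t, ht₀, ht₁⟩ := Set.projIcc 0 1 zero_le_one β
  rcases ht₀.lt_or_eq with ht | rfl
  · nlinarith
  · simpa using hq

lemma mix_apply_pos_of_left {β : ℝ} (hβ : β ∈ Set.Ioc 0 1) {p : Lot X} (q : Lot X) {x : ↥X}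
    (hp : 0 < p.1 x) : 0 < (mix β p q).1 x := by
  rw [mix_apply_of_mem (Set.Ioc_subset_Icc_self hβ)]
  nlinarith [q.nonneg x, hβ.1, hβ.2]

lemma continuous_mix {Y : Type*} [TopologicalSpace Y] {β : Y → ℝ} {p q : Y → Lot X}
    (hβ : Continuous β) (hp : Continuous p) (hq : Continuous q) :
    Continuous fun t => mix (β t) (p t) (q t) := by
  refine Continuous.subtype_mk ((PiLp.continuous_toLp 2 _).comp (continuous_pi fun x => ?_)) _
  have ht : Continuous fun t => (Set.projIcc 0 1 zero_le_one (β t) : ℝ) :=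
    continuous_subtype_val.comp (continuous_projIcc.comp hβ)
  fun_prop

end Lot

section Lotteries

variable {hX : X.Nonempty}

lemma EV_deg (a : ↥X) (f : ↥X → ℝ) : EV (deg a) f = f a := by
  simp [EV, Lot.deg_apply]

lemma EV_mix {β : ℝ} (hβ : β ∈ Set.Icc 0 1) (p q : Lot X) (f : ↥X → ℝ) :
    EV (Lot.mix β p q) f = β * EV p f + (1 - β) * EV q f := by
  simp only [EV, Lot.mix_apply_of_mem hβ, add_mul, mul_assoc, Finset.sum_add_distrib,
    ← Finset.mul_sum]

lemma le_EV_of_forall_le (q : Lot X) {f : ↥X → ℝ} {a : ℝ} (h : ∀ x, a ≤ f x) : a ≤ EV q f :=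
  calc a = ∑ x, q.1 x * a := by rw [← Finset.sum_mul, q.sum_eq_one, one_mul]
    _ ≤ EV q f := Finset.sum_le_sum fun x _ => mul_le_mul_of_nonneg_left (h x) (q.nonneg x)

lemma EV_le_of_forall_le (q : Lot X) {f : ↥X → ℝ} {a : ℝ} (h : ∀ x, f x ≤ a) : EV q f ≤ a :=
  calc EV q f ≤ ∑ x, q.1 x * a :=
        Finset.sum_le_sum fun x _ => mul_le_mul_of_nonneg_left (h x) (q.nonneg x)
    _ = a := by rw [← Finset.sum_mul, q.sum_eq_one, one_mul]

lemma eq_of_le_of_EV_eq {q : Lot X} (hq : ∀ x, 0 < q.1 x) {f g : ↥X → ℝ} (hfg : ∀ x, f x ≤ g x)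
    (h : EV q f = EV q g) : f = g := by
  have := (Finset.sum_eq_sum_iff_of_le fun x _ =>
    mul_le_mul_of_nonneg_left (hfg x) (q.nonneg x)).1 h
  exact funext fun x => mul_left_cancel₀ (hq x).ne' (this x (Finset.mem_univ x))

def bw (hX : X.Nonempty) (α : ℝ) : Lot X := Lot.mix α (deg (bIdx hX)) (deg (wIdx hX))

lemma continuous_bw : Continuous (bw hX) :=
  Lot.continuous_mix continuous_id continuous_const continuous_const

lemma bw_val {α : ℝ} (hα : α ∈ Set.Icc 0 1) :
    (bw hX α).1 = α • degv (bIdx hX) + (1 - α) • degv (wIdx hX) :=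
  Lot.mix_val_of_mem hα _ _

lemma bw_apply_bIdx (hbw : bIdx hX ≠ wIdx hX) {α : ℝ} (hα : α ∈ Set.Icc 0 1) :
    (bw hX α).1 (bIdx hX) = α := by
  simp [bw, Lot.mix_apply_of_mem hα, Lot.deg_apply, hbw]

lemma bw_apply_wIdx (hbw : bIdx hX ≠ wIdx hX) {α : ℝ} (hα : α ∈ Set.Icc 0 1) :
    (bw hX α).1 (wIdx hX) = 1 - α := by
  simp [bw, Lot.mix_apply_of_mem hα, Lot.deg_apply, hbw.symm]

lemma inBW_bw (α : ℝ) : inBW hX (bw hX α) := fun x hb hw => by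
  simp [bw, Lot.mix, Lot.deg_apply, hb, hw]

lemma EV_bw {α : ℝ} (hα : α ∈ Set.Icc 0 1) (f : ↥X → ℝ) :
    EV (bw hX α) f = α * f (bIdx hX) + (1 - α) * f (wIdx hX) := by
  rw [bw, EV_mix hα, EV_deg, EV_deg]

lemma exists_of_not_inBW {q : Lot X} (h : ¬ inBW hX q) :
    ∃ y, y ≠ bIdx hX ∧ y ≠ wIdx hX ∧ 0 < q.1 y := by
  simp only [inBW, not_forall] at h
  obtain ⟨y, hb, hw, hy⟩ := h
  exact ⟨y, hb, hw, (q.nonneg y).lt_of_ne' hy⟩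

lemma not_inBW_of_forall_pos {q p : Lot X} (hq : ¬ inBW hX q) (hp : ∀ x, 0 < p.1 x) :
    ¬ inBW hX p := fun h => by
  obtain ⟨y, hb, hw, -⟩ := exists_of_not_inBW hq
  exact (hp y).ne' (h y hb hw)

lemma bIdx_ne_wIdx {q : Lot X} (hq : ¬ inBW hX q) : bIdx hX ≠ wIdx hX := fun h => by
  obtain ⟨y, hb, hw, -⟩ := exists_of_not_inBW hq
  have := (wIdx_lt_coe hw).trans (coe_lt_bIdx hb)
  rw [h] at this
  exact lt_irrefl _ this

lemma MPS.of_spread {p a ν : Lot X} {y : ↥X} {ε : ℝ} (hε : 0 ≤ ε) (hne : a ≠ p)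
    (hν : ∑ x : ↥X, ν.1 x * (x : ℝ) = y)
    (ha : ∀ x, a.1 x = p.1 x + ε * (ν.1 x - (deg y).1 x)) : MPS a p := by
  have hEV (f : ↥X → ℝ) : EV a f = EV p f + ε * (EV ν f - f y) := by
    rw [← EV_deg y f]
    simp only [EV, ha, add_mul, mul_sub, sub_mul, mul_assoc, Finset.sum_add_distrib,
      Finset.sum_sub_distrib, ← Finset.mul_sum]
  refine ⟨hne, ?_, fun z => ?_⟩
  · change EV a (fun x => (x : ℝ)) = EV p (fun x => (x : ℝ))
    rw [hEV, show EV ν (fun x => (x : ℝ)) = y from hν]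
    ring
  · have hconv : ConvexOn ℝ Set.univ (fun t : ℝ => max (z - t) 0) :=
      ((convexOn_const z convex_univ).sub (concaveOn_id convex_univ)).sup
        (convexOn_const 0 convex_univ)
    have hJensen := hconv.map_sum_le (t := Finset.univ) (w := fun x => ν.1 x)
      (p := fun x : ↥X => (x : ℝ)) (fun x _ => ν.nonneg x) ν.sum_eq_one fun _ _ => trivial
    simp only [smul_eq_mul, hν] at hJensen
    change EV p _ ≤ EV a _
    rw [hEV]
    exact le_add_of_nonneg_right (mul_nonneg hε (sub_nonneg.2 hJensen))

lemma exists_pos_sum_mul_eq {y : ℝ} (hwy : (wIdx hX : ℝ) < y) (hyb : y < bIdx hX) :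
    ∃ ν : Lot X, (∀ x, 0 < ν.1 x) ∧ ∑ x : ↥X, ν.1 x * (x : ℝ) = y := by
  set b : ℝ := (bIdx hX : ℝ)
  set w : ℝ := (wIdx hX : ℝ)
  have hcard : (0 : ℝ) < X.card := by exact_mod_cast hX.card_pos
  let U : Lot X := Lot.ofFun (fun _ => (X.card : ℝ)⁻¹) (fun _ => by positivity)
    (by simp [hcard.ne'])
  set μ := EV U (fun x => (x : ℝ))
  have hμw : w ≤ μ := le_EV_of_forall_le U wIdx_le_coe
  have hμb : μ ≤ b := EV_le_of_forall_le U coe_le_bIdx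
  obtain ⟨κ₀, hκ₀, hκ₀b⟩ := exists_pos_mul_lt (lt_min (sub_pos.2 hwy) (sub_pos.2 hyb)) (b - w)
  set κ := min κ₀ (1 / 2)
  have hκ : κ ∈ Set.Icc 0 1 := ⟨le_min hκ₀.le (by norm_num), (min_le_right _ _).trans (by norm_num)⟩
  have hκ1 : κ < 1 := (min_le_right _ _).trans_lt (by norm_num)
  have hκb : (b - w) * κ < min (y - w) (b - y) :=
    (mul_le_mul_of_nonneg_left (min_le_left _ _) (by linarith)).trans_lt hκ₀b
  -- `ν = κ U + (1 - κ) bw θ`; the mean `m` of its `{b, w}`-part solves `κ μ + (1 - κ) m = y`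
  set m := (y - κ * μ) / (1 - κ)
  have hm : w ≤ m ∧ m ≤ b := by
    constructor
    · rw [le_div_iff₀ (by linarith)]; nlinarith [min_le_left (y - w) (b - y)]
    · rw [div_le_iff₀ (by linarith)]; nlinarith [min_le_right (y - w) (b - y)]
  set θ := (m - w) / (b - w)
  have hθ : θ ∈ Set.Icc 0 1 :=
    ⟨div_nonneg (by linarith) (by linarith), (div_le_one (by linarith)).2 (by linarith)⟩
  refine ⟨Lot.mix κ U (bw hX θ), fun x => ?_, ?_⟩
  · exact Lot.mix_apply_pos_of_left ⟨(lt_min hκ₀ (by norm_num)), hκ.2⟩ _ (by simp [U, hcard])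
  · change EV _ (fun x => (x : ℝ)) = y
    rw [EV_mix hκ, EV_bw hθ]
    have hbw : b - w ≠ 0 := by linarith
    have h1κ : 1 - κ ≠ 0 := by linarith
    simp only [θ, m]
    field_simp
    ring

lemma exists_pos_MPS {p : Lot X} (hp : ¬ inBW hX p) {E : ℝ} (hb : p.1 (bIdx hX) < E)
    (hw : E < 1 - p.1 (wIdx hX)) :
    ∃ a : Lot X, MPS a p ∧ (∀ x, 0 < a.1 x) ∧ a.1 (bIdx hX) < E ∧ E < 1 - a.1 (wIdx hX) := by
  obtain ⟨y, hyb, hyw, hy⟩ := exists_of_not_inBW hp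
  obtain ⟨ν, hν, hνy⟩ := exists_pos_sum_mul_eq (wIdx_lt_coe hyw) (coe_lt_bIdx hyb)
  obtain ⟨ε, hε, hεm⟩ := exists_between
    (lt_min hy (lt_min (sub_pos.2 hb) (sub_pos.2 (lt_sub_comm.1 hw))))
  simp only [lt_min_iff] at hεm
  obtain ⟨hεy, hεb, hεw⟩ := hεm
  have hpos (x : ↥X) : 0 < p.1 x + ε * (ν.1 x - (deg y).1 x) := by
    rw [Lot.deg_apply]
    split_ifs with h
    · subst h; nlinarith [ν.nonneg x]
    · nlinarith [p.nonneg x, mul_pos hε (hν x)]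
  let a : Lot X := Lot.ofFun _ (fun x => (hpos x).le) (by
    simp only [mul_sub, Finset.sum_add_distrib, Finset.sum_sub_distrib, ← Finset.mul_sum,
      Lot.sum_eq_one]
    ring)
  have ha_b : a.1 (bIdx hX) = p.1 (bIdx hX) + ε * ν.1 (bIdx hX) := by
    simp [a, Lot.deg_apply, hyb.symm]
  have ha_w : a.1 (wIdx hX) = p.1 (wIdx hX) + ε * ν.1 (wIdx hX) := by
    simp [a, Lot.deg_apply, hyw.symm]
  have hne : a ≠ p := fun h => by
    have := congrArg (fun q : Lot X => q.1 (wIdx hX)) h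
    simp only [ha_w] at this
    nlinarith [mul_pos hε (hν (wIdx hX))]
  refine ⟨a, MPS.of_spread hε.le hne hνy fun _ => rfl, hpos, ?_, ?_⟩
  · nlinarith [ν.apply_le_one (bIdx hX)]
  · nlinarith [ν.apply_le_one (wIdx hX)]

end Lotteries

lemma ClosedGraphC.mem_pair_of_tendsto {c : Finset (Lot X) → Finset (Lot X)} (hc : ClosedGraphC c)
    {p q x : ℕ → Lot X} {p₀ q₀ x₀ : Lot X} (hp : Tendsto p atTop (𝓝 p₀))
    (hq : Tendsto q atTop (𝓝 q₀)) (hx : Tendsto x atTop (𝓝 x₀))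
    (hmem : ∀ n, x n ∈ c {p n, q n}) : x₀ ∈ c {p₀, q₀} := by
  refine hc x₀ x _ (fun n => {p n, q n}) (Finset.insert_nonempty _ _)
    (fun _ => Finset.insert_nonempty _ _) hx ?_ hmem
  have hd := (tendsto_iff_dist_tendsto_zero.1 hp).max (tendsto_iff_dist_tendsto_zero.1 hq)
  rw [max_self] at hd
  refine squeeze_zero (fun _ => Metric.hausdorffDist_nonneg) (fun n => ?_) hd
  push_cast
  exact Metric.hausdorffDist_pair_le _ _ _ _

section Representation

variable {hX : X.Nonempty} {c : Finset (Lot X) → Finset (Lot X)} {R : Lot X → Lot X → Prop}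
  {u : Lot X → ↥X → ℝ} {r : Finset (Lot X) → Lot X}

namespace IsAREU

lemma R_trans (h : IsAREU hX c R u r) {p q s : Lot X} (hpq : R p q) (hqs : R q s) : R p s :=
  h.1.trans _ _ _ hpq hqs

lemma R_antisymm (h : IsAREU hX c R u r) {p q : Lot X} (hpq : R p q) (hqp : R q p) : p = q :=
  h.1.antisymm _ _ hpq hqp

lemma R_total (h : IsAREU hX c R u r) (p q : Lot X) : R p q ∨ R q p := h.1.total p q

lemma R_of_MPS (h : IsAREU hX c R u r) {p q : Lot X} (hpq : MPS p q) : R q p :=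
  h.2.1 p q (Or.inl hpq)

lemma R_mix_bw (h : IsAREU hX c R u r) {q : Lot X} {β α : ℝ} (hβ : β ∈ Set.Ico 0 1)
    (hb : q.1 (bIdx hX) < α) (hw : α < 1 - q.1 (wIdx hX)) : R q (Lot.mix β q (bw hX α)) := by
  have hα : α ∈ Set.Icc 0 1 := ⟨(q.nonneg _).trans hb.le, by linarith [q.nonneg (wIdx hX)]⟩
  refine h.2.1 _ q (Or.inr ⟨β, α, hβ.1, hβ.2, hb, hw, ?_⟩)
  rw [Lot.mix_val_of_mem (Set.Ico_subset_Icc_self hβ), bw_val hα]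

lemma r_pair_of_R (h : IsAREU hX c R u r) {p q : Lot X} (hpq : R p q) : r {p, q} = p := by
  obtain ⟨hmem, hmax⟩ := h.2.2.2.2.1 _ (Finset.insert_nonempty p {q})
  rcases Finset.mem_insert.1 hmem with hp | hq
  · exact hp
  · rw [Finset.mem_singleton.1 hq] at hmax ⊢
    exact h.R_antisymm (hmax p (Finset.mem_insert_self _ _)) hpq

lemma mem_c_pair_iff (h : IsAREU hX c R u r) {p q : Lot X} :
    p ∈ c {p, q} ↔ EV q (u (r {p, q})) ≤ EV p (u (r {p, q})) := by
  rw [h.2.2.2.2.2.1 _ (Finset.insert_nonempty p {q})]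
  simp

end IsAREU

structure IsNormalizedAREU (hX : X.Nonempty) (c : Finset (Lot X) → Finset (Lot X))
    (R : Lot X → Lot X → Prop) (u : Lot X → ↥X → ℝ) (r : Finset (Lot X) → Lot X) : Prop where
  isAREU : IsAREU hX c R u r
  u_wIdx : ∀ p, u p (wIdx hX) = 0
  u_bIdx : ∀ p, u p (bIdx hX) = 1

namespace IsNormalizedAREU

lemma u_mem_Icc (H : IsNormalizedAREU hX c R u r) (p : Lot X) (x : ↥X) : u p x ∈ Set.Icc 0 1 :=
  H.isAREU.2.2.2.1 p x

lemma u_lt_one (H : IsNormalizedAREU hX c R u r) (p : Lot X) {x : ↥X} (hx : x ≠ bIdx hX) :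
    u p x < 1 :=
  H.u_bIdx p ▸ H.isAREU.2.2.1 p _ _ (coe_lt_bIdx hx)

lemma u_pos (H : IsNormalizedAREU hX c R u r) (p : Lot X) {x : ↥X} (hx : x ≠ wIdx hX) :
    0 < u p x :=
  H.u_wIdx p ▸ H.isAREU.2.2.1 p _ _ (wIdx_lt_coe hx)

lemma EV_mem_Icc (H : IsNormalizedAREU hX c R u r) (q p : Lot X) : EV q (u p) ∈ Set.Icc 0 1 :=
  ⟨le_EV_of_forall_le q fun x => (H.u_mem_Icc p x).1,
    EV_le_of_forall_le q fun x => (H.u_mem_Icc p x).2⟩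

lemma EV_bw_u (H : IsNormalizedAREU hX c R u r) {α : ℝ} (hα : α ∈ Set.Icc 0 1) (p : Lot X) :
    EV (bw hX α) (u p) = α := by
  rw [EV_bw hα, H.u_bIdx, H.u_wIdx]
  ring

lemma apply_bIdx_lt_EV (H : IsNormalizedAREU hX c R u r) {q : Lot X} (hq : ¬ inBW hX q)
    (p : Lot X) : q.1 (bIdx hX) < EV q (u p) := by
  obtain ⟨y, hyb, hyw, hy⟩ := exists_of_not_inBW hq
  have hle : ∑ x ∈ {bIdx hX, y}, q.1 x * u p x ≤ EV q (u p) :=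
    Finset.sum_le_sum_of_subset_of_nonneg (Finset.subset_univ _)
      fun x _ _ => mul_nonneg (q.nonneg x) (H.u_mem_Icc p x).1
  rw [Finset.sum_pair hyb.symm, H.u_bIdx] at hle
  nlinarith [mul_pos hy (H.u_pos p hyw)]

lemma EV_lt_one_sub_apply_wIdx (H : IsNormalizedAREU hX c R u r) {q : Lot X}
    (hq : ¬ inBW hX q) (p : Lot X) : EV q (u p) < 1 - q.1 (wIdx hX) := by
  obtain ⟨y, hyb, hyw, hy⟩ := exists_of_not_inBW hq
  have hle : ∑ x ∈ {wIdx hX, y}, q.1 x * (1 - u p x) ≤ ∑ x, q.1 x * (1 - u p x) :=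
    Finset.sum_le_sum_of_subset_of_nonneg (Finset.subset_univ _)
      fun x _ _ => mul_nonneg (q.nonneg x) (sub_nonneg.2 (H.u_mem_Icc p x).2)
  have hsum : ∑ x, q.1 x * (1 - u p x) = 1 - EV q (u p) := by
    simp only [EV, mul_sub, mul_one, Finset.sum_sub_distrib, q.sum_eq_one]
  rw [Finset.sum_pair hyw.symm, H.u_wIdx, hsum] at hle
  nlinarith [mul_pos hy (sub_pos.2 (H.u_lt_one p hyb))]

lemma u_le_of_R (H : IsNormalizedAREU hX c R u r) {p q : Lot X} (hpq : R p q) (x : ↥X) :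
    u q x ≤ u p x := by
  obtain ⟨f, hf, -, hfu⟩ := H.isAREU.2.2.2.2.2.2.1 q p hpq
  have h₀ : f 0 = 0 := by simpa [H.u_wIdx] using (hfu (wIdx hX)).symm
  have h₁ : f 1 = 1 := by simpa [H.u_bIdx] using (hfu (bIdx hX)).symm
  exact hfu x ▸ hf.le_of_map_zero_of_map_one h₀ h₁ (H.u_mem_Icc q x)

lemma r_pair_bw_eq_or (H : IsNormalizedAREU hX c R u r) {q : Lot X} (hq : ¬ inBW hX q) (α : ℝ) :
    r {q, bw hX α} = q ∨ α ≤ q.1 (bIdx hX) ∨ 1 - q.1 (wIdx hX) ≤ α := by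
  obtain ⟨hmem, hmax⟩ := H.isAREU.2.2.2.2.1 _ (Finset.insert_nonempty q {bw hX α})
  rcases Finset.mem_insert.1 hmem with hr | hr
  · exact Or.inl hr
  · rw [Finset.mem_singleton.1 hr] at hmax
    by_contra! hα
    have hne : q ≠ bw hX α := fun h => hq (h ▸ inBW_bw α)
    have hspread := H.isAREU.R_mix_bw (β := 0) ⟨le_rfl, one_pos⟩ hα.2.1 hα.2.2
    rw [Lot.mix_zero] at hspread
    exact hne (H.isAREU.R_antisymm hspread (hmax q (Finset.mem_insert_self _ _)))

lemma mem_c_pair_bw_iff (H : IsNormalizedAREU hX c R u r) {q : Lot X} (hq : ¬ inBW hX q)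
    {α : ℝ} (hα : α ∈ Set.Icc 0 1) : q ∈ c {q, bw hX α} ↔ α ≤ EV q (u q) := by
  rw [H.isAREU.mem_c_pair_iff, H.EV_bw_u hα]
  rcases H.r_pair_bw_eq_or hq α with hr | hαb | hαw
  · rw [hr]
  · exact iff_of_true (hαb.trans (H.apply_bIdx_lt_EV hq _).le)
      (hαb.trans (H.apply_bIdx_lt_EV hq _).le)
  · exact iff_of_false (not_le.2 ((H.EV_lt_one_sub_apply_wIdx hq _).trans_le hαw))
      (not_le.2 ((H.EV_lt_one_sub_apply_wIdx hq _).trans_le hαw))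

lemma bw_mem_c_pair_iff (H : IsNormalizedAREU hX c R u r) {q : Lot X} (hq : ¬ inBW hX q)
    {α : ℝ} (hα : α ∈ Set.Icc 0 1) : bw hX α ∈ c {q, bw hX α} ↔ EV q (u q) ≤ α := by
  rw [Finset.pair_comm, H.isAREU.mem_c_pair_iff, Finset.pair_comm (bw hX α), H.EV_bw_u hα]
  rcases H.r_pair_bw_eq_or hq α with hr | hαb | hαw
  · rw [hr]
  · exact iff_of_false (not_le.2 (hαb.trans_lt (H.apply_bIdx_lt_EV hq _)))
      (not_le.2 (hαb.trans_lt (H.apply_bIdx_lt_EV hq _)))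
  · exact iff_of_true ((H.EV_lt_one_sub_apply_wIdx hq _).le.trans hαw)
      ((H.EV_lt_one_sub_apply_wIdx hq _).le.trans hαw)

/-- Transitivity through `bw hX (EV p (u p))`, which is indifferent to both `p` and `q`. -/
lemma mem_c_pair_of_EV_self_eq (H : IsNormalizedAREU hX c R u r)
    (htrans : TransOver c {A | A.Nonempty}) {p q : Lot X} (hp : ¬ inBW hX p)
    (hq : ¬ inBW hX q) (h : EV p (u p) = EV q (u q)) : p ∈ c {p, q} := by
  have hα := H.EV_mem_Icc p p
  refine htrans p (bw hX (EV p (u p))) q (Finset.insert_nonempty _ _)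
    (Finset.insert_nonempty _ _) (Finset.insert_nonempty _ _)
    ((H.mem_c_pair_bw_iff hp hα).2 le_rfl) ?_
  rw [Finset.pair_comm]
  exact (H.bw_mem_c_pair_iff hq hα).2 h.ge

/-- At a limit point `α` of the values, the closed graph makes both `q` and `bw hX α` chosen
from `{q, bw hX α}`, so `α = EV q (u q)`. -/
lemma tendsto_EV_self (H : IsNormalizedAREU hX c R u r) {qs : ℕ → Lot X} {q : Lot X}
    (hqs : ∀ n, ¬ inBW hX (qs n)) (hq : ¬ inBW hX q) (h : Tendsto qs atTop (𝓝 q)) :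
    Tendsto (fun n => EV (qs n) (u (qs n))) atTop (𝓝 (EV q (u q))) := by
  refine tendsto_of_subseq_tendsto fun ns hns => ?_
  obtain ⟨α, hα, φ, hφ, hlim⟩ :=
    isCompact_Icc.tendsto_subseq fun n => H.EV_mem_Icc (qs (ns n)) (qs (ns n))
  have hq' : Tendsto (fun n => qs (ns (φ n))) atTop (𝓝 q) := h.comp (hns.comp hφ.tendsto_atTop)
  have hbw := (continuous_bw (hX := hX)).continuousAt.tendsto.comp hlim
  have hclosed := H.isAREU.2.2.2.2.2.2.2
  have h₁ := hclosed.mem_pair_of_tendsto hq' hbw hq' fun n =>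
    (H.mem_c_pair_bw_iff (hqs _) (H.EV_mem_Icc _ _)).2 le_rfl
  have h₂ := hclosed.mem_pair_of_tendsto hq' hbw hbw fun n =>
    (H.bw_mem_c_pair_iff (hqs _) (H.EV_mem_Icc _ _)).2 le_rfl
  rw [← le_antisymm ((H.mem_c_pair_bw_iff hq hα).1 h₁) ((H.bw_mem_c_pair_iff hq hα).1 h₂)]
  exact ⟨φ, hlim⟩

lemma continuous_EV_self_comp (H : IsNormalizedAREU hX c R u r) {Y : Type*} [TopologicalSpace Y]
    [SequentialSpace Y] {P : Y → Lot X} (hP : Continuous P) (hN : ∀ t, ¬ inBW hX (P t)) :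
    Continuous fun t => EV (P t) (u (P t)) :=
  SeqContinuous.continuous fun _ t ht =>
    H.tendsto_EV_self (fun _ => hN _) (hN t) ((hP.tendsto t).comp ht)

/-- For small `β`, the bounds `s(b) < EV s (u s) < 1 - s(w)` on `s = q^β (bw γ)` put the value
below `E` at `γ₀` and above `E` at `γ₁`; the intermediate value theorem does the rest. -/
lemma exists_R_EV_self_eq (H : IsNormalizedAREU hX c R u r) {q : Lot X} (hqN : ¬ inBW hX q)
    (hq : ∀ x, 0 < q.1 x) {E : ℝ} (hb : q.1 (bIdx hX) < E) (hw : E < 1 - q.1 (wIdx hX)) :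
    ∃ s, R q s ∧ (∀ x, 0 < s.1 x) ∧ EV s (u s) = E := by
  have hbw := bIdx_ne_wIdx hqN
  set W := 1 - q.1 (wIdx hX) - q.1 (bIdx hX)
  have hW : 0 ≤ W := by linarith [q.apply_add_apply_le_one hbw]
  obtain ⟨β₀, hβ₀, hβ₀W⟩ :=
    exists_pos_mul_lt (lt_min (sub_pos.2 hb) (by linarith : 0 < 1 - q.1 (wIdx hX) - E)) W
  set β := min β₀ (1 / 2)
  have hβ : β ∈ Set.Ioo 0 1 := ⟨lt_min hβ₀ (by norm_num), (min_le_right _ _).trans_lt (by norm_num)⟩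
  have hβW : W * β < min (E - q.1 (bIdx hX)) (1 - q.1 (wIdx hX) - E) :=
    (mul_le_mul_of_nonneg_left (min_le_left _ _) hW).trans_lt hβ₀W
  have h1β : 0 < 1 - β := sub_pos.2 hβ.2
  set γ₀ := (E - β * (1 - q.1 (wIdx hX))) / (1 - β)
  set γ₁ := (E - β * q.1 (bIdx hX)) / (1 - β)
  have hγ₀ : (1 - β) * γ₀ = E - β * (1 - q.1 (wIdx hX)) := mul_div_cancel₀ _ h1β.ne'
  have hγ₁ : (1 - β) * γ₁ = E - β * q.1 (bIdx hX) := mul_div_cancel₀ _ h1β.ne'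
  have hbγ₀ : q.1 (bIdx hX) < γ₀ := by
    rw [lt_div_iff₀ h1β]; nlinarith [min_le_left (E - q.1 (bIdx hX)) (1 - q.1 (wIdx hX) - E)]
  have hγ₁w : γ₁ < 1 - q.1 (wIdx hX) := by
    rw [div_lt_iff₀ h1β]; nlinarith [min_le_right (E - q.1 (bIdx hX)) (1 - q.1 (wIdx hX) - E)]
  have hγ₀₁ : γ₀ ≤ γ₁ := div_le_div_of_nonneg_right (by nlinarith [hβ.1]) h1β.le
  have hI : Set.Icc γ₀ γ₁ ⊆ Set.Icc 0 1 := Set.Icc_subset_Icc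
    ((q.nonneg _).trans hbγ₀.le) (hγ₁w.le.trans (by linarith [q.nonneg (wIdx hX)]))
  set s : ℝ → Lot X := fun γ => Lot.mix β q (bw hX γ)
  have hs (γ : ℝ) (x : ↥X) : 0 < (s γ).1 x := Lot.mix_apply_pos_of_left ⟨hβ.1, hβ.2.le⟩ _ (hq x)
  have hsN (γ : ℝ) : ¬ inBW hX (s γ) := not_inBW_of_forall_pos hqN (hs γ)
  have hβ' : β ∈ Set.Icc 0 1 := Set.Ioo_subset_Icc_self hβ
  have h₀ : EV (s γ₀) (u (s γ₀)) ≤ E := by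
    have := H.EV_lt_one_sub_apply_wIdx (hsN γ₀) (s γ₀)
    rw [Lot.mix_apply_of_mem hβ', bw_apply_wIdx hbw (hI ⟨le_rfl, hγ₀₁⟩)] at this
    linarith
  have h₁ : E ≤ EV (s γ₁) (u (s γ₁)) := by
    have := H.apply_bIdx_lt_EV (hsN γ₁) (s γ₁)
    rw [Lot.mix_apply_of_mem hβ', bw_apply_bIdx hbw (hI ⟨hγ₀₁, le_rfl⟩)] at this
    linarith
  have hcont : Continuous fun γ => EV (s γ) (u (s γ)) := H.continuous_EV_self_comp
    (Lot.continuous_mix continuous_const continuous_const continuous_bw) hsN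
  obtain ⟨γ, hγ, hγE⟩ := intermediate_value_Icc hγ₀₁ hcont.continuousOn ⟨h₀, h₁⟩
  exact ⟨s γ, H.isAREU.R_mix_bw ⟨hβ.1.le, hβ.2⟩ (hbγ₀.trans_le hγ.1) (hγ.2.trans_lt hγ₁w),
    hs γ, hγE⟩

/-- A spread `s` of `q` with `EV s (u s) = EV p (u p)` is indifferent to `p`; as
`u s ≤ u q ≤ u p` and `s` has full support, the indifference forces `u s = u p`. -/
lemma u_eq_of_R (H : IsNormalizedAREU hX c R u r) (htrans : TransOver c {A | A.Nonempty})
    {p q : Lot X} (hp : ¬ inBW hX p) (hq : ∀ x, 0 < q.1 x) (hpq : R p q)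
    (hb : q.1 (bIdx hX) < EV p (u p)) (hw : EV p (u p) < 1 - q.1 (wIdx hX)) : u p = u q := by
  obtain ⟨s, hqs, hs, hEV⟩ := H.exists_R_EV_self_eq (not_inBW_of_forall_pos hp hq) hq hb hw
  have hps := H.isAREU.R_trans hpq hqs
  have hsN := not_inBW_of_forall_pos hp hs
  have h₁ := H.isAREU.mem_c_pair_iff.1 (H.mem_c_pair_of_EV_self_eq htrans hp hsN hEV.symm)
  have h₂ := H.isAREU.mem_c_pair_iff.1 (H.mem_c_pair_of_EV_self_eq htrans hsN hp hEV)
  rw [H.isAREU.r_pair_of_R hps] at h₁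
  rw [Finset.pair_comm, H.isAREU.r_pair_of_R hps] at h₂
  have hsp : u s = u p := eq_of_le_of_EV_eq hs (H.u_le_of_R hps) (by linarith)
  funext x
  linarith [H.u_le_of_R hpq x, H.u_le_of_R hqs x, congrFun hsp x]

lemma exists_pos_u_eq (H : IsNormalizedAREU hX c R u r) (htrans : TransOver c {A | A.Nonempty})
    {p : Lot X} (hp : ¬ inBW hX p) : ∃ a : Lot X, (∀ x, 0 < a.1 x) ∧ u a = u p := by
  obtain ⟨a, hap, ha, hb, hw⟩ :=
    exists_pos_MPS hp (H.apply_bIdx_lt_EV hp p) (H.EV_lt_one_sub_apply_wIdx hp p)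
  exact ⟨a, ha, (H.u_eq_of_R htrans hp ha (H.isAREU.R_of_MPS hap) hb hw).symm⟩

lemma isLocallyConstant_u_comp (H : IsNormalizedAREU hX c R u r)
    (htrans : TransOver c {A | A.Nonempty}) {Y : Type*} [TopologicalSpace Y] [SequentialSpace Y]
    {P : Y → Lot X} (hP : Continuous P) (hN : ∀ t, ¬ inBW hX (P t))
    (hpos : ∀ t x, 0 < (P t).1 x) : IsLocallyConstant (u ∘ P) := by
  have hEV := (H.continuous_EV_self_comp hP hN).tendsto
  have hPb : Continuous fun t => (P t).1 (bIdx hX) := by fun_prop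
  have hPw : Continuous fun t => 1 - (P t).1 (wIdx hX) := by fun_prop
  refine (IsLocallyConstant.iff_eventually_eq _).2 fun t => ?_
  have hb := H.apply_bIdx_lt_EV (hN t) (P t)
  have hw := H.EV_lt_one_sub_apply_wIdx (hN t) (P t)
  filter_upwards [(hPb.tendsto t).eventually_lt_const hb, (hPw.tendsto t).eventually_const_lt hw,
    (hEV t).eventually_const_lt hb, (hEV t).eventually_lt_const hw] with t' h₁ h₂ h₃ h₄
  rcases H.isAREU.R_total (P t) (P t') with hR | hR
  · exact (H.u_eq_of_R htrans (hN t) (hpos t') hR h₁ h₂).symm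
  · exact H.u_eq_of_R htrans (hN t') (hpos t) hR h₃ h₄

lemma u_eq_of_pos (H : IsNormalizedAREU hX c R u r) (htrans : TransOver c {A | A.Nonempty})
    {p q : Lot X} (hpN : ¬ inBW hX p) (hp : ∀ x, 0 < p.1 x) (hq : ∀ x, 0 < q.1 x) :
    u p = u q := by
  have hpos (t : ℝ) (x : ↥X) : 0 < (Lot.mix t q p).1 x := Lot.mix_apply_pos t (hq x) (hp x)
  have hconst := H.isLocallyConstant_u_comp htrans
    (Lot.continuous_mix continuous_id continuous_const continuous_const)
    (fun t => not_inBW_of_forall_pos hpN (hpos t)) hpos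
  simpa [Lot.mix_zero, Lot.mix_one] using hconst.apply_eq_of_preconnectedSpace 0 1

end IsNormalizedAREU

end Representation

theorem stmt16_general (X : Finset ℝ) (hX : X.Nonempty)
    (c : Finset (Lot X) → Finset (Lot X))
    (R : Lot X → Lot X → Prop) (u : Lot X → ↥X → ℝ) (r : Finset (Lot X) → Lot X)
    (hrep : IsAREU hX c R u r)
    (hnorm : ∀ p : Lot X, u p (wIdx hX) = 0 ∧ u p (bIdx hX) = 1)
    (htrans : TransOver c {A : Finset (Lot X) | A.Nonempty}) :
    ∀ p₁ p₂ : Lot X, ¬ inBW hX p₁ → ¬ inBW hX p₂ → u p₁ = u p₂ := by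
  intro p₁ p₂ h₁ h₂
  have H : IsNormalizedAREU hX c R u r := ⟨hrep, fun p => (hnorm p).1, fun p => (hnorm p).2⟩
  obtain ⟨a₁, ha₁, hu₁⟩ := H.exists_pos_u_eq htrans h₁
  obtain ⟨a₂, ha₂, hu₂⟩ := H.exists_pos_u_eq htrans h₂
  rw [← hu₁, ← hu₂]
  exact H.u_eq_of_pos htrans (not_inBW_of_forall_pos h₁ ha₁) ha₁ ha₂

/-- Lemma 6: in a normalized AREU representation of a choice
correspondence satisfying Transitivity over `𝒜`, all utilities indexed by lotteries
outside `Δ({b,w})` coincide. -/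
theorem stmt16 (X : Finset ℝ) (hX : X.Nonempty) (hcard : 2 ≤ X.card)
    (c : Finset (Lot X) → Finset (Lot X))
    (hc : ∀ A : Finset (Lot X), A.Nonempty → c A ⊆ A ∧ (c A).Nonempty)
    (R : Lot X → Lot X → Prop) (u : Lot X → ↥X → ℝ) (r : Finset (Lot X) → Lot X)
    (hrep : IsAREU hX c R u r)
    (hnorm : ∀ p : Lot X, u p (wIdx hX) = 0 ∧ u p (bIdx hX) = 1)
    (htrans : TransOver c {A : Finset (Lot X) | A.Nonempty}) :
    ∀ p₁ p₂ : Lot X, ¬ inBW hX p₁ → ¬ inBW hX p₂ → u p₁ = u p₂ :=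
  stmt16_general X hX c R u r hrep hnorm htrans
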